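/- Every trace produced by a decentralised configuration of a decentralisable refined global type G is a valid refined trace (well-queued w.r.t. the empty queue and well-predicated under the empty map). -/

import Mathlib

namespace RefinedMPST

abbrev Part := Nat
abbrev Var := Nat
abbrev Val := Int
abbrev Label := Nat

/-- A message: a label, a variable name and a value. -/
abbrev Msg := Label × Var × Val

inductive Dir where
  | send
  | recv
deriving DecidableEq

/-- An abstract refinement predicate: a set of free variables and an
evaluation function on maps, whose truth only depends on the free variables. -/
structure Refn where
  fv : Set Var
  eval : (Var → Option Val) → Prop
  congr : ∀ M M' : Var → Option Val, (∀ x ∈ fv, M x = M' x) → (eval M ↔ eval M')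

/-- An action `p † q ⟨m⟩ · r` with sender `p`, direction `†`, receiver `q`,
message `m` and refinement `r`.  Sender and receiver are required distinct. -/
structure Action where
  src : Part
  dir : Dir
  dst : Part
  msg : Msg
  ref : Refn

abbrev Trace := List Action

/-- Maps from variables to values. -/
abbrev Map := Var → Option Val

def updM (M : Map) (x : Var) (c : Val) : Map := Function.update M x (some c)
def removeM (M : Map) (x : Var) : Map := Function.update M x none
def MDom (M : Map) : Set Var := {x | M x ≠ none}
def emptyM : Map := fun _ => none

/-- `Sat M r`, written `M ⊨ r`: the free variables of `r` are in the domain of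
`M` and `r` evaluates to true under `M`. -/
def Sat (M : Map) (r : Refn) : Prop := r.fv ⊆ MDom M ∧ r.eval M

/-- A queue: one FIFO of messages per ordered pair of participants
(oldest element at the head). -/
abbrev Queue := Part → Part → List Msg

def emptyQ : Queue := fun _ _ => []
/-- Push `e` on the FIFO from `p` to `q` (at the tail, i.e. newest end). -/
def pushQ (w : Queue) (e : Msg) (p q : Part) : Queue :=
  fun p' q' => if p' = p ∧ q' = q then w p q ++ [e] else w p' q'
/-- Pop the oldest element of the FIFO from `p` to `q`. -/
def popQ (w : Queue) (p q : Part) : Queue :=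
  fun p' q' => if p' = p ∧ q' = q then (w p q).tail else w p' q'
/-- The oldest element of the FIFO from `p` to `q` (if any). -/
def nextQ (w : Queue) (p q : Part) : Option Msg := (w p q).head?

/-- `EndsUpQ τ w_i w_f`: trace `τ` ends up with queue `w_f` w.r.t. the
initial queue `w_i` (Definition of trace ending up with queues). -/
inductive EndsUpQ : Trace → Queue → Queue → Prop where
  | nil (w : Queue) : EndsUpQ [] w w
  | snd {p q : Part} {m : Msg} {r : Refn} {τ : Trace} {w wf : Queue} :
      EndsUpQ τ (pushQ w m p q) wf →
      EndsUpQ (Action.mk p Dir.send q m r :: τ) w wf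
  | rcv {p q : Part} {m : Msg} {r : Refn} {τ : Trace} {w wf : Queue} :
      nextQ w p q = some m →
      EndsUpQ τ (popQ w p q) wf →
      EndsUpQ (Action.mk p Dir.recv q m r :: τ) w wf

/-- `WellPred τ M`: trace `τ` is well-predicated under the map `M`. -/
inductive WellPred : Trace → Map → Prop where
  | nil (M : Map) : WellPred [] M
  | cons {p : Part} {d : Dir} {q : Part} {l : Label} {x : Var} {c : Val}
      {r : Refn} {τ : Trace} {M : Map} :
      Sat (updM M x c) r →
      WellPred τ (updM M x c) →
      WellPred (Action.mk p d q (l, x, c) r :: τ) M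

/-- A refined communicating finite state machine with states in `S`. -/
structure RCFSM (S : Type) where
  init : S
  trans : S → Action → S → Prop

/-- A refined communicating system: one RCFSM per participant. -/
abbrev RCS (S : Type) := Part → RCFSM S

/-- A refined configuration: local states, queue, and global map. -/
structure Config (S : Type) where
  st : Part → S
  q : Queue
  m : Map

/-- The centralised refined global semantics (rules GRSnd and GRRec). -/
inductive Step {S : Type} (R : RCS S) : Config S → Action → Config S → Prop where
  | snd {C : Config S} {i j : Part} {l : Label} {x : Var} {c : Val} {r : Refn} {s' : S} :
      (R i).trans (C.st i) (Action.mk i Dir.send j (l, x, c) r) s' →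
      Sat (updM C.m x c) r →
      Step R C (Action.mk i Dir.send j (l, x, c) r)
        (Config.mk (Function.update C.st i s') (pushQ C.q (l, x, c) i j) (updM C.m x c))
  | rcv {C : Config S} {j i : Part} {l : Label} {x : Var} {c : Val} {r : Refn} {s' : S} :
      (R i).trans (C.st i) (Action.mk j Dir.recv i (l, x, c) r) s' →
      Sat (updM C.m x c) r →
      nextQ C.q j i = some (l, x, c) →
      Step R C (Action.mk j Dir.recv i (l, x, c) r)
        (Config.mk (Function.update C.st i s') (popQ C.q j i) (updM C.m x c))

/-- Sequences of reductions, recording the trace of actions. -/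
inductive Steps {S : Type} (R : RCS S) : Config S → Trace → Config S → Prop where
  | refl (C : Config S) : Steps R C [] C
  | step {C C' C'' : Config S} {a : Action} {τ : Trace} :
      Step R C a C' → Steps R C' τ C'' → Steps R C (a :: τ) C''

/-- A configuration is initial when the queue and map are empty and each
participant is in its initial local state. -/
def Initial {S : Type} (R : RCS S) (C : Config S) : Prop :=
  C.q = emptyQ ∧ C.m = emptyM ∧ ∀ p, C.st p = (R p).init

/-- A configuration is final when the queue is empty. -/
def Final {S : Type} (C : Config S) : Prop := C.q = emptyQ

/-- A configuration is reachable if it appears in a run from an initial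
configuration. -/
def Reachable {S : Type} (R : RCS S) (C : Config S) : Prop :=
  ∃ C0 τ, Initial R C0 ∧ Steps R C0 τ C

/-- A decentralised configuration: each participant has a local map. -/
structure DConfig (S : Type) where
  st : Part → S
  lm : Part → Map
  q : Queue

/-- The decentralised global semantics (rules DSnd and DRec). -/
inductive DStep {S : Type} (R : RCS S) : DConfig S → Action → DConfig S → Prop where
  | snd {D : DConfig S} {i j : Part} {l : Label} {x : Var} {c : Val} {r : Refn} {s' : S} :
      (R i).trans (D.st i) (Action.mk i Dir.send j (l, x, c) r) s' →
      Sat (updM (D.lm i) x c) r →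
      DStep R D (Action.mk i Dir.send j (l, x, c) r)
        (DConfig.mk (Function.update D.st i s')
          (Function.update D.lm i (removeM (D.lm i) x))
          (pushQ D.q (l, x, c) i j))
  | rcv {D : DConfig S} {j i : Part} {l : Label} {x : Var} {c : Val} {r : Refn} {s' : S} :
      (R i).trans (D.st i) (Action.mk j Dir.recv i (l, x, c) r) s' →
      Sat (updM (D.lm i) x c) r →
      nextQ D.q j i = some (l, x, c) →
      DStep R D (Action.mk j Dir.recv i (l, x, c) r)
        (DConfig.mk (Function.update D.st i s')
          (Function.update D.lm i (updM (D.lm i) x c))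
          (popQ D.q j i))

inductive DSteps {S : Type} (R : RCS S) : DConfig S → Trace → DConfig S → Prop where
  | refl (D : DConfig S) : DSteps R D [] D
  | step {D D' D'' : DConfig S} {a : Action} {τ : Trace} :
      DStep R D a D' → DSteps R D' τ D'' → DSteps R D (a :: τ) D''

def DInitial {S : Type} (R : RCS S) (D : DConfig S) : Prop :=
  D.q = emptyQ ∧ (∀ p, D.lm p = emptyM) ∧ ∀ p, D.st p = (R p).init

def DFinal {S : Type} (D : DConfig S) : Prop := D.q = emptyQ

def DReachable {S : Type} (R : RCS S) (D : DConfig S) : Prop :=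
  ∃ D0 τ, DInitial R D0 ∧ DSteps R D0 τ D

/-- Condition (1) of decentralisable types: no variable is duplicated among
local maps and in-transit messages. -/
def NoDupVars {S : Type} (D : DConfig S) : Prop :=
  (∀ x i, x ∈ MDom (D.lm i) →
      (∀ p q, ∀ m ∈ D.q p q, m.2.1 ≠ x) ∧ (∀ j, x ∈ MDom (D.lm j) → j = i)) ∧
  (∀ x p q n m, (D.q p q)[(n : Nat)]? = some m → m.2.1 = x →
      (∀ i, x ∉ MDom (D.lm i)) ∧
      (∀ p' q' n' m', (D.q p' q')[(n' : Nat)]? = some m' → m'.2.1 = x →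
        p' = p ∧ q' = q ∧ n' = n))

/-- Condition (2): the free variables of the refinement of any enabled local
transition of participant `i` are in `i`'s (updated) local map. -/
def FVCond {S : Type} (R : RCS S) (D : DConfig S) : Prop :=
  ∀ i (s' : S) (a : Action), (R i).trans (D.st i) a s' →
    (a.dir = Dir.send → a.src = i →
      a.ref.fv ⊆ MDom (updM (D.lm i) a.msg.2.1 a.msg.2.2)) ∧
    (a.dir = Dir.recv → a.dst = i →
      a.ref.fv ⊆ MDom (updM (D.lm i) a.msg.2.1 a.msg.2.2))

/-- The two conditions hold in every reachable decentralised configuration. -/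
def Decentralisable {S : Type} (R : RCS S) : Prop :=
  ∀ D, DReachable R D → NoDupVars D ∧ FVCond R D

/-- Refined local types. -/
inductive LType where
  | intC (q : Part) (bs : List (Label × Var × Refn × LType))
  | extC (p : Part) (bs : List (Label × Var × Refn × LType))
  | mu (t : Nat) (L : LType)
  | var (t : Nat)
  | lend

/-- Remove leading recursion binders. -/
def strip : LType → LType
  | .mu _ T => strip T
  | T => T

/-- Refined global types. -/
inductive GType where
  | comm (p q : Part) (bs : List (Label × Var × Refn × GType))
  | mu (t : Nat) (G : GType)
  | var (t : Nat)
  | gend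

/-- `RoleIn pr G`: participant `pr` appears in `G`. -/
inductive RoleIn (pr : Part) : GType → Prop where
  | sender {p q : Part} {bs} : pr = p → RoleIn pr (.comm p q bs)
  | receiver {p q : Part} {bs} : pr = q → RoleIn pr (.comm p q bs)
  | branch {p q : Part} {bs} {b : Label × Var × Refn × GType} :
      b ∈ bs → RoleIn pr b.2.2.2 → RoleIn pr (.comm p q bs)
  | mu {t : Nat} {G : GType} : RoleIn pr G → RoleIn pr (.mu t G)

/-- `FreeRV t G`: the recursion variable `t` occurs free in `G`. -/
inductive FreeRV (t : Nat) : GType → Prop where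
  | var : FreeRV t (.var t)
  | branch {p q : Part} {bs} {b : Label × Var × Refn × GType} :
      b ∈ bs → FreeRV t b.2.2.2 → FreeRV t (.comm p q bs)
  | mu {t' : Nat} {G : GType} : t ≠ t' → FreeRV t G → FreeRV t (.mu t' G)

/-- Projection of a global type onto a participant (refinements are checked
on the sending side; the receiver gets trivial refinements). -/
inductive Proj (pr : Part) : GType → LType → Prop where
  | sender {q : Part} {bs : List (Label × Var × Refn × GType)}
      {bs' : List (Label × Var × Refn × LType)} :
      q ≠ pr →
      bs'.length = bs.length →
      (∀ n b b', bs[(n : Nat)]? = some b → bs'[(n : Nat)]? = some b' →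
        b'.1 = b.1 ∧ b'.2.1 = b.2.1 ∧ b'.2.2.1 = b.2.2.1) →
      (∀ n b b', bs[(n : Nat)]? = some b → bs'[(n : Nat)]? = some b' →
        Proj pr b.2.2.2 b'.2.2.2) →
      Proj pr (.comm pr q bs) (.intC q bs')
  | receiver {p : Part} {bs : List (Label × Var × Refn × GType)}
      {bs' : List (Label × Var × Refn × LType)} :
      p ≠ pr →
      bs'.length = bs.length →
      (∀ n b b', bs[(n : Nat)]? = some b → bs'[(n : Nat)]? = some b' →
        b'.1 = b.1 ∧ b'.2.1 = b.2.1 ∧ b'.2.2.1 = topRefn) →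
      (∀ n b b', bs[(n : Nat)]? = some b → bs'[(n : Nat)]? = some b' →
        Proj pr b.2.2.2 b'.2.2.2) →
      Proj pr (.comm p pr bs) (.extC p bs')
  | other {p q : Part} {bs : List (Label × Var × Refn × GType)} {L : LType} :
      p ≠ pr → q ≠ pr → bs ≠ [] →
      (∀ b ∈ bs, Proj pr b.2.2.2 L) →
      Proj pr (.comm p q bs) L
  | muRec {t : Nat} {G : GType} {L : LType} :
      (RoleIn pr G ∨ ∃ t', FreeRV t' G) → Proj pr G L →
      Proj pr (.mu t G) (.mu t L)
  | muEnd {t : Nat} {G : GType} :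
      ¬ RoleIn pr G → (∀ t', ¬ FreeRV t' G) →
      Proj pr (.mu t G) .lend
  | var {t : Nat} : Proj pr (.var t) (.var t)
  | pend : Proj pr .gend .lend

/-- `OccG G' G`: the global type `G'` occurs in `G`. -/
inductive OccG : GType → GType → Prop where
  | refl (G : GType) : OccG G G
  | branch {G' : GType} {p q : Part} {bs} {b : Label × Var × Refn × GType} :
      b ∈ bs → OccG G' b.2.2.2 → OccG G' (.comm p q bs)
  | mu {G' : GType} {t : Nat} {G : GType} : OccG G' G → OccG G' (.mu t G)

/-- `OccL T' T`: the local type `T'` occurs in `T`. -/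
inductive OccL : LType → LType → Prop where
  | refl (T : LType) : OccL T T
  | intC {T' : LType} {q : Part} {bs} {b : Label × Var × Refn × LType} :
      b ∈ bs → OccL T' b.2.2.2 → OccL T' (.intC q bs)
  | extC {T' : LType} {q : Part} {bs} {b : Label × Var × Refn × LType} :
      b ∈ bs → OccL T' b.2.2.2 → OccL T' (.extC q bs)
  | mu {T' : LType} {t : Nat} {T : LType} : OccL T' T → OccL T' (.mu t T)

/-- Target state of a continuation: strip leading binders, and unfold
recursion variables using the top-level type `T0`. -/
inductive Tgt (T0 : LType) : LType → LType → Prop where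
  | notVar {T : LType} : (∀ t, T ≠ .var t) → Tgt T0 T (strip T)
  | isVar {t : Nat} {T' : LType} :
      OccL (.mu t T') T0 → Tgt T0 (.var t) (strip T')

/-- The RCFSM of the refined local type `T0` of participant `pr`
(states are the subtypes of `T0`, stripped of recursion binders). -/
def ltAut (pr : Part) (T0 : LType) : RCFSM LType where
  init := strip T0
  trans := fun u a u' =>
    OccL u T0 ∧ (∀ t, u ≠ .var t) ∧ (∀ t T, u ≠ .mu t T) ∧
    ((∃ q bs, u = .intC q bs ∧ ∃ b ∈ bs, ∃ c : Val,
        a = Action.mk pr Dir.send q (b.1, b.2.1, c) b.2.2.1 ∧ Tgt T0 b.2.2.2 u') ∨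
     (∃ q bs, u = .extC q bs ∧ ∃ b ∈ bs, ∃ c : Val,
        a = Action.mk q Dir.recv pr (b.1, b.2.1, c) b.2.2.1 ∧ Tgt T0 b.2.2.2 u'))

/-- The refined communicating system of a projected global type. -/
def RcsOf (proj : Part → LType) : RCS LType := fun p => ltAut p (proj p)

/-- Direct happens-before between communications of a global type. -/
inductive HB1 : GType → GType → Prop where
  | intro {p q : Part} {bs} {b : Label × Var × Refn × GType}
      {r s : Part} {bs'} :
      b ∈ bs → OccG (.comm r s bs') b.2.2.2 → (r = p ∨ r = q) →
      HB1 (.comm p q bs) (.comm r s bs')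

/-- Happens-before: the transitive closure of `HB1`. -/
def HB : GType → GType → Prop := Relation.TransGen HB1

/-- All labels are uniquely used in `G`. -/
def UniqueLabels (G : GType) : Prop :=
  ∀ (p1 q1 : Part) bs1 (p2 q2 : Part) bs2,
    OccG (.comm p1 q1 bs1) G → OccG (.comm p2 q2 bs2) G →
    ∀ n1 (b1 : Label × Var × Refn × GType) n2 (b2 : Label × Var × Refn × GType),
      bs1[(n1 : Nat)]? = some b1 → bs2[(n2 : Nat)]? = some b2 → b1.1 = b2.1 →
      p1 = p2 ∧ q1 = q2 ∧ bs1 = bs2 ∧ n1 = n2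

/-! ### Auxiliary lemmas for the proof -/

lemma dsteps_append {S : Type} {R : RCS S} {D D' D'' : DConfig S} {τ : Trace} {a : Action}
    (h : DSteps R D τ D') (h' : DStep R D' a D'') : DSteps R D (τ ++ [a]) D'' := by
  induction h with
  | refl => exact DSteps.step h' (DSteps.refl _)
  | step h1 _ ih => exact DSteps.step h1 (ih h')

lemma dreachable_step {S : Type} {R : RCS S} {D D' : DConfig S} {a : Action}
    (h : DReachable R D) (h' : DStep R D a D') : DReachable R D' := by
  obtain ⟨D0, τ, hI, hS⟩ := h
  exact ⟨D0, τ ++ [a], hI, dsteps_append hS h'⟩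

lemma dsteps_endsq {S : Type} {R : RCS S} {D D' : DConfig S} {τ : Trace}
    (h : DSteps R D τ D') : EndsUpQ τ D.q D'.q := by
  induction h with
  | refl => exact EndsUpQ.nil _
  | step h1 _ ih =>
    cases h1 with
    | snd _ _ => exact EndsUpQ.snd ih
    | rcv _ _ hn => exact EndsUpQ.rcv hn ih

lemma sat_transfer {Mloc M : Map} {x : Var} {c : Val} {r : Refn}
    (h : Sat (updM Mloc x c) r) (hag : ∀ y, Mloc y ≠ none → M y = Mloc y) :
    Sat (updM M x c) r := by
  obtain ⟨hfv, hev⟩ := h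
  have hagree : ∀ y ∈ r.fv, updM M x c y = updM Mloc x c y := by
    intro y hy
    by_cases hyx : y = x
    · subst hyx; simp [updM]
    · have hdom := hfv hy
      have hloc : Mloc y ≠ none := by
        simpa [MDom, updM, Function.update_apply, hyx] using hdom
      simp [updM, Function.update_apply, hyx, hag y hloc]
  constructor
  · intro y hy
    have := hagree y hy
    have hdom := hfv hy
    simpa [MDom, this] using hdom
  · exact (r.congr _ _ hagree).2 hev

/-- The simulation invariant: `M` extends each local map and records the
values of all in-transit messages. -/
def Inv {S : Type} (D : DConfig S) (M : Map) : Prop :=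
  (∀ i y, D.lm i y ≠ none → M y = D.lm i y) ∧
  (∀ p q, ∀ m ∈ D.q p q, M m.2.1 = some m.2.2)

lemma wellpred_of_dsteps {S : Type} {R : RCS S} (hdec : Decentralisable R) :
    ∀ {τ : Trace} {D D' : DConfig S}, DSteps R D τ D' → DReachable R D →
      ∀ M, Inv D M → WellPred τ M := by
  intro τ D D' h
  induction h with
  | refl => intro _ M _; exact WellPred.nil M
  | @step D D1 D'' a τ h1 _ ih =>
    intro hreach M hInv
    have hreach1 : DReachable R D1 := dreachable_step hreach h1
    have hndD : NoDupVars D := (hdec D hreach).1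
    have hndD1 : NoDupVars D1 := (hdec D1 hreach1).1
    cases h1 with
    | @snd i j l x c r s' htr hsat =>
      -- send step
      have hsatM : Sat (updM M x c) r := sat_transfer hsat (hInv.1 i)
      have hnewmem : (l, x, c) ∈
          (pushQ D.q (l, x, c) i j) i j := by
        simp [pushQ]
      have hInv1 : Inv (DConfig.mk (Function.update D.st i s')
          (Function.update D.lm i (removeM (D.lm i) x))
          (pushQ D.q (l, x, c) i j)) (updM M x c) := by
        constructor
        · intro i' y hy
          by_cases hi : i' = i
          · subst hi
            simp only [Function.update_self] at hy ⊢
            have hyx : y ≠ x := by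
              intro hyx; subst hyx
              simp [removeM, Function.update_self] at hy
            have hly : D.lm i' y ≠ none := by
              simpa [removeM, Function.update_apply, hyx] using hy
            have := hInv.1 i' y hly
            simp [updM, Function.update_apply, hyx, removeM, this]
          · simp only [Function.update_of_ne hi] at hy ⊢
            by_cases hyx : y = x
            · subst hyx
              -- x in lm i' while message (l,x,c) in transit: contradiction
              have hxdom : y ∈ MDom ((DConfig.mk (Function.update D.st i s')
                  (Function.update D.lm i (removeM (D.lm i) y))
                  (pushQ D.q (l, y, c) i j)).lm i') := by
                simp [MDom, Function.update_of_ne hi, hy]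
              have := (hndD1.1 y i' hxdom).1 i j (l, y, c) hnewmem
              exact absurd rfl this
            · have := hInv.1 i' y hy
              simp [updM, Function.update_apply, hyx, this]
        · intro p q m hm
          by_cases hpq : p = i ∧ q = j
          · obtain ⟨hp, hq⟩ := hpq; subst hp; subst hq
            have hm2 : m ∈ D.q p q ++ [(l, x, c)] := by
              simpa [pushQ] using hm
            rcases List.mem_append.1 hm2 with hm | hm
            on_goal 2 => replace hm := List.mem_singleton.1 hm
            · -- old message; its variable cannot be x
              by_cases hmx : m.2.1 = x
              · exfalso
                obtain ⟨n, hn⟩ := List.mem_iff_getElem?.1 hm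
                have hlen : n < (D.q p q).length := List.getElem?_eq_some_iff.1 hn |>.1
                have hap : (D.q p q ++ [(l, x, c)])[n]? = some m := by
                  rw [List.getElem?_append_left hlen]; exact hn
                have hn1 : ((pushQ D.q (l, x, c) p q) p q)[n]? = some m := by
                  simpa [pushQ] using hap
                have huniq := (hndD1.2 x p q n m hn1 hmx).2
                have hnew : ((pushQ D.q (l, x, c) p q) p q)[(D.q p q).length]? = some (l, x, c) := by
                  simpa [pushQ] using List.getElem?_concat_length (l := D.q p q) (a := (l, x, c))
                have := (huniq p q (D.q p q).length (l, x, c) hnew rfl).2.2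
                omega
              · have := hInv.2 p q m hm
                simp [updM, Function.update_apply, hmx, this]
            · subst hm
              simp [updM]
          · have hm' : m ∈ D.q p q := by
              simpa [pushQ, if_neg hpq] using hm
            by_cases hmx : m.2.1 = x
            · exfalso
              obtain ⟨n, hn⟩ := List.mem_iff_getElem?.1 hm'
              have hn1 : ((pushQ D.q (l, x, c) i j) p q)[n]? = some m := by
                simpa [pushQ, if_neg hpq] using hn
              have huniq := (hndD1.2 x p q n m hn1 hmx).2
              have hnew : ((pushQ D.q (l, x, c) i j) i j)[(D.q i j).length]? = some (l, x, c) := by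
                simpa [pushQ] using List.getElem?_concat_length (l := D.q i j) (a := (l, x, c))
              have h3 := huniq i j (D.q i j).length (l, x, c) hnew rfl
              exact hpq ⟨h3.1.symm, h3.2.1.symm⟩
            · have := hInv.2 p q m hm'
              simp [updM, Function.update_apply, hmx, this]
      exact WellPred.cons hsatM (ih hreach1 _ hInv1)
    | @rcv j i l x c r s' htr hsat hnext =>
      -- receive step
      have hsatM : Sat (updM M x c) r := sat_transfer hsat (hInv.1 i)
      have hheadmem : (l, x, c) ∈ D.q j i :=
        List.mem_of_mem_head? (by simpa [nextQ] using hnext)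
      have hInv1 : Inv (DConfig.mk (Function.update D.st i s')
          (Function.update D.lm i (updM (D.lm i) x c))
          (popQ D.q j i)) (updM M x c) := by
        constructor
        · intro i' y hy
          by_cases hi : i' = i
          · subst hi
            simp only [Function.update_self] at hy ⊢
            by_cases hyx : y = x
            · subst hyx; simp [updM]
            · have hly : D.lm i' y ≠ none := by
                simpa [updM, Function.update_apply, hyx] using hy
              have := hInv.1 i' y hly
              simp [updM, Function.update_apply, hyx, this]
          · simp only [Function.update_of_ne hi] at hy ⊢
            by_cases hyx : y = x
            · subst hyx
              exfalso
              have hxdom : y ∈ MDom (D.lm i') := hy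
              have := (hndD.1 y i' hxdom).1 j i (l, y, c) hheadmem
              exact this rfl
            · have := hInv.1 i' y hy
              simp [updM, Function.update_apply, hyx, this]
        · intro p q m hm
          by_cases hmx : m.2.1 = x
          · exfalso
            have hxdom : x ∈ MDom ((DConfig.mk (Function.update D.st i s')
                (Function.update D.lm i (updM (D.lm i) x c))
                (popQ D.q j i)).lm i) := by
              simp [MDom, Function.update_self, updM]
            have := (hndD1.1 x i hxdom).1 p q m hm
            exact this hmx
          · have hm' : m ∈ D.q p q := by
              by_cases hpq : p = j ∧ q = i
              · obtain ⟨hp, hq⟩ := hpq; subst hp; subst hq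
                have hm2 : m ∈ (D.q p q).tail := by simpa [popQ] using hm
                exact List.mem_of_mem_tail hm2
              · simpa [popQ, if_neg hpq] using hm
            have := hInv.2 p q m hm'
            simp [updM, Function.update_apply, hmx, this]
      exact WellPred.cons hsatM (ih hreach1 _ hInv1)

/-- Every (initial and final) trace of the decentralised semantics of the RCS
of a decentralisable global type `G` is a valid refined trace. -/
theorem decentralised_traces_valid (G : GType) (proj : Part → LType)
    (hproj : ∀ pr, Proj pr G (proj pr))
    (hdec : Decentralisable (RcsOf proj)) :
    ∀ (D0 D : DConfig LType) (τ : Trace),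
      DInitial (RcsOf proj) D0 → DSteps (RcsOf proj) D0 τ D → DFinal D →
      EndsUpQ τ emptyQ emptyQ ∧ WellPred τ emptyM := by
  intro D0 D τ hI hS hF
  obtain ⟨hq0, hlm0, hst0⟩ := hI
  constructor
  · have := dsteps_endsq hS
    rwa [hq0, hF] at this
  · refine wellpred_of_dsteps hdec hS ⟨D0, [], ⟨hq0, hlm0, hst0⟩, DSteps.refl _⟩
      emptyM ?_
    constructor
    · intro i y hy; rw [hlm0 i] at hy; exact absurd rfl hy
    · intro p q m hm; rw [hq0] at hm; simp [emptyQ] at hm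

end RefinedMPST
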